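/- Let B, E ∈ ℝ³ with ‖B‖ = 1, let c ∈ ℝ and v₀ ∈ ℝ³. Define v : ℝ → ℝ³ by v(t) = (cos t) v₀ + (sin t) (v₀ × B) + c (sin t) E + c (t − sin t) ⟨B, E⟩ B + c (1 − cos t) (E × B) + (1 − cos t) ⟨B, v₀⟩ B. Then v(0) = v₀ and, for every t ∈ ℝ, v'(t) = c E + v(t) × B. (Exact flow of the velocity substep E^v_α, with c = αH, used in the splitting scheme of the multi-revolution composition method.) -/

import Mathlib

open RealInnerProductSpace

/-
Collecting terms, v(t) = cos t • a + sin t • b + t • d + e for fixed vectors a, b, d, e.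
Since ‖B‖ = 1, the map u ↦ u × B kills multiples of B and sends u × B to ⟨B, u⟩ B − u
(BAC–CAB), so both sides of the ODE are computed by linearity and agree.
-/

noncomputable def cross3 (u v : EuclideanSpace ℝ (Fin 3)) : EuclideanSpace ℝ (Fin 3) :=
  WithLp.toLp 2 (crossProduct (fun i => u i) (fun i => v i))

section Cross3

variable (u w x : EuclideanSpace ℝ (Fin 3))

lemma cross3_def :
    cross3 u x = WithLp.toLp 2 (crossProduct (WithLp.ofLp u) (WithLp.ofLp x)) :=
  rfl

lemma cross3_add_left : cross3 (u + w) x = cross3 u x + cross3 w x := by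
  simp only [cross3_def, WithLp.ofLp_add, map_add, LinearMap.add_apply, WithLp.toLp_add]

lemma cross3_sub_left : cross3 (u - w) x = cross3 u x - cross3 w x := by
  simp only [cross3_def, WithLp.ofLp_sub, map_sub, LinearMap.sub_apply, WithLp.toLp_sub]

lemma cross3_smul_left (a : ℝ) : cross3 (a • u) x = a • cross3 u x := by
  simp only [cross3_def, WithLp.ofLp_smul, map_smul, LinearMap.smul_apply, WithLp.toLp_smul]

lemma cross3_self : cross3 u u = 0 := by
  simp [cross3_def, cross_self]

lemma cross3_cross3 : cross3 (cross3 u w) x = ⟪u, x⟫ • w - ⟪w, x⟫ • u := by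
  simp only [cross3_def, EuclideanSpace.inner_eq_star_dotProduct, star_trivial, dotProduct_comm x]
  exact congrArg (WithLp.toLp 2) (cross_cross_eq_smul_sub_smul _ _ _)

lemma cross3_cross3_of_norm_eq_one {B : EuclideanSpace ℝ (Fin 3)} (hB : ‖B‖ = 1) :
    cross3 (cross3 u B) B = ⟪B, u⟫ • B - u := by
  rw [cross3_cross3, real_inner_self_eq_norm_sq, hB, one_pow, one_smul, real_inner_comm]

end Cross3

lemma hasDerivAt_cos_smul_add_sin_smul_add_smul_add {F : Type*} [NormedAddCommGroup F]
    [NormedSpace ℝ F] (a b d e : F) (t : ℝ) :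
    HasDerivAt (fun s => Real.cos s • a + Real.sin s • b + s • d + e)
      (-Real.sin t • a + Real.cos t • b + d) t := by
  have h := ((((Real.hasDerivAt_cos t).smul_const a).add
    ((Real.hasDerivAt_sin t).smul_const b)).add ((hasDerivAt_id t).smul_const d)).add_const e
  simpa using h

/-- Exact flow of the velocity substep `v' = c E + v × B` (with `c = αH`) used in the
splitting scheme of the multi-revolution composition method. -/
theorem velocity_substep_exact_flow
    (B E : EuclideanSpace ℝ (Fin 3)) (hB : ‖B‖ = 1)
    (c : ℝ) (v₀ : EuclideanSpace ℝ (Fin 3))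
    (v : ℝ → EuclideanSpace ℝ (Fin 3))
    (hv : ∀ t : ℝ, v t =
      Real.cos t • v₀ + Real.sin t • cross3 v₀ B + (c * Real.sin t) • E
        + (c * (t - Real.sin t)) • (⟪B, E⟫ • B) + (c * (1 - Real.cos t)) • cross3 E B
        + (1 - Real.cos t) • (⟪B, v₀⟫ • B)) :
    v 0 = v₀ ∧ ∀ t : ℝ, HasDerivAt v (c • E + cross3 (v t) B) t := by
  refine ⟨by simp [hv 0], fun t => ?_⟩
  have hv_collected : v = fun s => Real.cos s • (v₀ - c • cross3 E B - ⟪B, v₀⟫ • B)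
      + Real.sin s • (cross3 v₀ B + c • E - (c * ⟪B, E⟫) • B) + s • ((c * ⟪B, E⟫) • B)
      + (c • cross3 E B + ⟪B, v₀⟫ • B) := by
    funext s
    rw [hv s]
    module
  rw [hv_collected]
  refine (hasDerivAt_cos_smul_add_sin_smul_add_smul_add _ _ _ _ t).congr_deriv ?_
  simp only [cross3_add_left, cross3_sub_left, cross3_smul_left, cross3_self, smul_zero,
    cross3_cross3_of_norm_eq_one _ hB]
  module
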